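/- arXiv:2301.11732 — 2 statements merged into one kernel-verified Lean document; each statement's English description precedes it below -/
import Mathlib

section
/- Under the assumptions of the previous statement, the AIPW identifying functional is doubly robust: if ψ̃_t(Z) = 1{T=t}(Y − m(X))/e_t(X) + m(X) where either m = μ_t (with e_t an arbitrary measurable function bounded away from 0 and 1) or e_t(X) = P(T=t|X) (with m an arbitrary bounded measurable function), then E[ψ̃_t(Z)] = E[Y(t)]. -/
open MeasureTheory ProbabilityTheory

set_option maxHeartbeats 1000000

section Aux

/-- Key lemma: under conditional independence of `Yt` and `T` given `m'`, the conditional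
expectation of `1{T = t} * Yt` factors as the product of the conditional expectations. -/
lemma aux_condexp_indicator_mul {Ω : Type*} {m' : MeasurableSpace Ω}
    [mΩ : MeasurableSpace Ω] [StandardBorelSpace Ω] (hm' : m' ≤ mΩ)
    (μ : Measure Ω) [IsProbabilityMeasure μ]
    {Yt : Ω → ℝ} (hYt : Measurable Yt) (hint : Integrable Yt μ)
    {T : Ω → Bool} (hT : Measurable T) (t : Bool)
    (hucf : CondIndepFun m' hm' Yt T μ) :
    μ[fun ω => (T ⁻¹' {t}).indicator (fun _ => (1 : ℝ)) ω * Yt ω | m'] =ᵐ[μ]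
      fun ω => (μ[(T ⁻¹' {t}).indicator (fun _ => (1 : ℝ)) | m']) ω * (μ[Yt | m']) ω := by
  have hA : MeasurableSet (T ⁻¹' {t}) := hT (measurableSet_singleton t)
  set A : Set Ω := T ⁻¹' {t} with hAdef
  set c : Ω → ℝ := μ[A.indicator (fun _ => (1 : ℝ)) | m'] with hcdef
  set d : Ω → ℝ := μ[Yt | m'] with hddef
  have hc_sm : StronglyMeasurable[m'] c := stronglyMeasurable_condExp
  have hd_sm : StronglyMeasurable[m'] d := stronglyMeasurable_condExp
  have hc_meas : Measurable c := (hc_sm.mono hm').measurable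
  have hindA_int : Integrable (A.indicator (fun _ => (1 : ℝ))) μ :=
    (integrable_const (1 : ℝ)).indicator hA
  have hc_nn : 0 ≤ᵐ[μ] c :=
    condExp_nonneg (Filter.Eventually.of_forall fun ω =>
      Set.indicator_nonneg (fun _ _ => zero_le_one) ω)
  have hc_le : c ≤ᵐ[μ] fun _ => (1 : ℝ) := by
    have h := condExp_mono (μ := μ) (m := m') hindA_int (integrable_const (1 : ℝ))
      (Filter.Eventually.of_forall fun ω => by
        by_cases h : ω ∈ A <;> simp [Set.indicator_apply, h])
    rwa [condExp_const hm'] at h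
  have hc_abs : ∀ᵐ ω ∂μ, |c ω| ≤ 1 := by
    filter_upwards [hc_nn, hc_le] with ω h1 h2
    rw [abs_of_nonneg h1]; exact h2
  -- indicator products
  have hprod : ∀ (U V : Set Ω) (ω : Ω),
      U.indicator (fun _ => (1 : ℝ)) ω * V.indicator (fun _ => (1 : ℝ)) ω
        = (V ∩ U).indicator (fun _ => (1 : ℝ)) ω := by
    intro U V ω
    by_cases h1 : ω ∈ U <;> by_cases h2 : ω ∈ V <;>
      simp [Set.indicator_apply, h1, h2]
  have hindYt : ∀ ω, A.indicator (fun _ => (1 : ℝ)) ω * Yt ω = A.indicator Yt ω := by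
    intro ω; by_cases h : ω ∈ A <;> simp [Set.indicator_apply, h]
  -- Step 1 : conditional independence at the level of indicators
  have h1 : ∀ C : Set ℝ, MeasurableSet C →
      (μ⟦Yt ⁻¹' C ∩ A | m'⟧) =ᵐ[μ] fun ω => (μ⟦Yt ⁻¹' C | m'⟧) ω * c ω := by
    intro C hC
    exact (condIndepFun_iff_condExp_inter_preimage_eq_mul hYt hT).mp hucf C {t} hC
      (measurableSet_singleton t)
  -- Step 2 : set-integral identity for indicators of `Yt`-preimages
  have h2 : ∀ s, MeasurableSet[m'] s → ∀ C : Set ℝ, MeasurableSet C →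
      ∫ ω in s, A.indicator (fun _ => (1 : ℝ)) ω * (Yt ⁻¹' C).indicator (fun _ => (1 : ℝ)) ω ∂μ
        = ∫ ω in s, c ω * (Yt ⁻¹' C).indicator (fun _ => (1 : ℝ)) ω ∂μ := by
    intro s hs C hC
    have hB : MeasurableSet (Yt ⁻¹' C) := hYt hC
    have hint_AB : Integrable ((Yt ⁻¹' C ∩ A).indicator (fun _ => (1 : ℝ))) μ :=
      (integrable_const (1 : ℝ)).indicator (hB.inter hA)
    have hint_B : Integrable ((Yt ⁻¹' C).indicator (fun _ => (1 : ℝ))) μ :=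
      (integrable_const (1 : ℝ)).indicator hB
    have hint_cB : Integrable (c * (Yt ⁻¹' C).indicator (fun _ => (1 : ℝ))) μ := by
      refine Integrable.mono' (integrable_const (1 : ℝ))
        ((hc_sm.mono hm').aestronglyMeasurable.mul
          ((stronglyMeasurable_const.indicator hB).aestronglyMeasurable)) ?_
      filter_upwards [hc_abs] with ω hω
      rw [Pi.mul_apply, Real.norm_eq_abs, abs_mul]
      have h2' : |(Yt ⁻¹' C).indicator (fun _ => (1 : ℝ)) ω| ≤ 1 := by
        by_cases h : ω ∈ Yt ⁻¹' C <;> simp [Set.indicator_apply, h]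
      calc |c ω| * |(Yt ⁻¹' C).indicator (fun _ => (1 : ℝ)) ω| ≤ 1 * 1 :=
            mul_le_mul hω h2' (abs_nonneg _) zero_le_one
        _ = 1 := one_mul 1
    have hpull : μ[c * (Yt ⁻¹' C).indicator (fun _ => (1 : ℝ)) | m'] =ᵐ[μ]
        c * μ[(Yt ⁻¹' C).indicator (fun _ => (1 : ℝ)) | m'] :=
      condExp_mul_of_stronglyMeasurable_left hc_sm hint_cB hint_B
    calc ∫ ω in s, A.indicator (fun _ => (1 : ℝ)) ω * (Yt ⁻¹' C).indicator (fun _ => (1 : ℝ)) ω ∂μ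
        = ∫ ω in s, (Yt ⁻¹' C ∩ A).indicator (fun _ => (1 : ℝ)) ω ∂μ := by
          simp only [hprod]
      _ = ∫ ω in s, (μ⟦Yt ⁻¹' C ∩ A | m'⟧) ω ∂μ :=
          (setIntegral_condExp hm' hint_AB hs).symm
      _ = ∫ ω in s, (μ⟦Yt ⁻¹' C | m'⟧) ω * c ω ∂μ :=
          integral_congr_ae (ae_restrict_of_ae (h1 C hC))
      _ = ∫ ω in s, c ω * (μ⟦Yt ⁻¹' C | m'⟧) ω ∂μ := by
          simp only [mul_comm]
      _ = ∫ ω in s, (μ[c * (Yt ⁻¹' C).indicator (fun _ => (1 : ℝ)) | m']) ω ∂μ :=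
          (integral_congr_ae (ae_restrict_of_ae hpull)).symm
      _ = ∫ ω in s, c ω * (Yt ⁻¹' C).indicator (fun _ => (1 : ℝ)) ω ∂μ :=
          setIntegral_condExp hm' hint_cB hs
  -- Step 3 : extension to `Yt` via pushforward measures
  have h3 : ∀ s, MeasurableSet[m'] s →
      ∫ ω in s, A.indicator (fun _ => (1 : ℝ)) ω * Yt ω ∂μ = ∫ ω in s, c ω * Yt ω ∂μ := by
    intro s hs
    have hsΩ : MeasurableSet s := hm' s hs
    have hmap : (μ.restrict (A ∩ s)).map Yt
        = ((μ.restrict s).withDensity (fun ω => ENNReal.ofReal (c ω))).map Yt := by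
      ext C hC
      rw [Measure.map_apply hYt hC, Measure.map_apply hYt hC]
      have hB : MeasurableSet (Yt ⁻¹' C) := hYt hC
      rw [withDensity_apply _ hB, Measure.restrict_restrict hB, Measure.restrict_apply hB]
      have h2' := h2 s hs C hC
      have hL : ∫ ω in s, A.indicator (fun _ => (1 : ℝ)) ω
            * (Yt ⁻¹' C).indicator (fun _ => (1 : ℝ)) ω ∂μ
          = (μ (Yt ⁻¹' C ∩ (A ∩ s))).toReal := by
        calc ∫ ω in s, A.indicator (fun _ => (1 : ℝ)) ω
              * (Yt ⁻¹' C).indicator (fun _ => (1 : ℝ)) ω ∂μ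
            = ∫ ω in s, (Yt ⁻¹' C ∩ A).indicator (fun _ => (1 : ℝ)) ω ∂μ := by
              simp only [hprod]
          _ = ((μ.restrict s) (Yt ⁻¹' C ∩ A)).toReal • (1 : ℝ) :=
              integral_indicator_const (1 : ℝ) (hB.inter hA)
          _ = (μ (Yt ⁻¹' C ∩ (A ∩ s))).toReal := by
              rw [Measure.restrict_apply (hB.inter hA), smul_eq_mul, mul_one, Set.inter_assoc]
      have hR : ∫ ω in s, c ω * (Yt ⁻¹' C).indicator (fun _ => (1 : ℝ)) ω ∂μ
          = ∫ ω in Yt ⁻¹' C ∩ s, c ω ∂μ := by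
        have hce : ∀ ω, c ω * (Yt ⁻¹' C).indicator (fun _ => (1 : ℝ)) ω
            = (Yt ⁻¹' C).indicator c ω := by
          intro ω; by_cases h : ω ∈ Yt ⁻¹' C <;> simp [Set.indicator_apply, h]
        rw [show (fun ω => c ω * (Yt ⁻¹' C).indicator (fun _ => (1 : ℝ)) ω)
            = (Yt ⁻¹' C).indicator c from funext hce, integral_indicator hB,
          Measure.restrict_restrict hB]
      rw [hL, hR] at h2'
      have hnn : 0 ≤ᵐ[μ.restrict (Yt ⁻¹' C ∩ s)] c := ae_restrict_of_ae hc_nn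
      rw [← ENNReal.ofReal_toReal (measure_ne_top μ (Yt ⁻¹' C ∩ (A ∩ s))), h2',
        ofReal_integral_eq_lintegral_ofReal integrable_condExp.integrableOn hnn]
    calc ∫ ω in s, A.indicator (fun _ => (1 : ℝ)) ω * Yt ω ∂μ
        = ∫ ω in s, A.indicator Yt ω ∂μ := by simp only [hindYt]
      _ = ∫ ω in A, Yt ω ∂(μ.restrict s) := integral_indicator hA
      _ = ∫ ω, Yt ω ∂(μ.restrict (A ∩ s)) := by rw [Measure.restrict_restrict hA]
      _ = ∫ x, x ∂((μ.restrict (A ∩ s)).map Yt) :=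
          (integral_map hYt.aemeasurable aestronglyMeasurable_id).symm
      _ = ∫ x, x ∂(((μ.restrict s).withDensity (fun ω => ENNReal.ofReal (c ω))).map Yt) := by
          rw [hmap]
      _ = ∫ ω, Yt ω ∂((μ.restrict s).withDensity (fun ω => ENNReal.ofReal (c ω))) :=
          integral_map hYt.aemeasurable aestronglyMeasurable_id
      _ = ∫ ω, (c ω).toNNReal • Yt ω ∂(μ.restrict s) :=
          integral_withDensity_eq_integral_smul hc_meas.real_toNNReal Yt
      _ = ∫ ω in s, c ω * Yt ω ∂μ := by
          refine integral_congr_ae ?_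
          filter_upwards [ae_restrict_of_ae hc_nn] with ω hω
          rw [NNReal.smul_def, Real.coe_toNNReal _ hω, smul_eq_mul]
  -- Step 4 : identify the conditional expectation
  have hfint : Integrable (fun ω => A.indicator (fun _ => (1 : ℝ)) ω * Yt ω) μ :=
    (hint.indicator hA).congr (Filter.Eventually.of_forall fun ω => (hindYt ω).symm)
  have hd_int : Integrable d μ := integrable_condExp
  have hg_int : Integrable (fun ω => c ω * d ω) μ := by
    refine Integrable.mono' hd_int.abs
      ((hc_sm.mono hm').aestronglyMeasurable.mul (hd_sm.mono hm').aestronglyMeasurable) ?_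
    filter_upwards [hc_abs] with ω hω
    rw [Real.norm_eq_abs, abs_mul]
    exact mul_le_of_le_one_left (abs_nonneg _) hω
  have hcyt_int : Integrable (c * Yt) μ := by
    refine Integrable.mono' hint.abs
      ((hc_sm.mono hm').aestronglyMeasurable.mul hYt.aestronglyMeasurable) ?_
    filter_upwards [hc_abs] with ω hω
    rw [Pi.mul_apply, Real.norm_eq_abs, abs_mul]
    exact mul_le_of_le_one_left (abs_nonneg _) hω
  have hkey : (fun ω => c ω * d ω) =ᵐ[μ]
      μ[fun ω => A.indicator (fun _ => (1 : ℝ)) ω * Yt ω | m'] := by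
    refine ae_eq_condExp_of_forall_setIntegral_eq hm' hfint
      (fun s _ _ => hg_int.integrableOn) (fun s hs _ => ?_)
      ((hc_sm.mul hd_sm).aestronglyMeasurable)
    have hpull : μ[c * Yt | m'] =ᵐ[μ] c * μ[Yt | m'] :=
      condExp_mul_of_stronglyMeasurable_left hc_sm hcyt_int hint
    calc ∫ ω in s, c ω * d ω ∂μ
        = ∫ ω in s, (μ[c * Yt | m']) ω ∂μ :=
          (integral_congr_ae (ae_restrict_of_ae hpull)).symm
      _ = ∫ ω in s, (c * Yt) ω ∂μ := setIntegral_condExp hm' hcyt_int hs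
      _ = ∫ ω in s, A.indicator (fun _ => (1 : ℝ)) ω * Yt ω ∂μ := (h3 s hs).symm
  exact hkey.symm

/-- Part (a) helper: integral of the AIPW correction term vanishes when the outcome
regression is correct. -/
lemma auxA {Ω : Type*} {m' : MeasurableSpace Ω}
    [mΩ : MeasurableSpace Ω] [StandardBorelSpace Ω] (hm' : m' ≤ mΩ)
    (μ : Measure Ω) [IsProbabilityMeasure μ]
    {Yt : Ω → ℝ} (hYt : Measurable Yt) (hint : Integrable Yt μ)
    {T : Ω → Bool} (hT : Measurable T) (t : Bool)
    (hucf : CondIndepFun m' hm' Yt T μ)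
    {w : Ω → ℝ} (hw : StronglyMeasurable[m'] w)
    {g : Ω → ℝ}
    (hg : g =ᵐ[μ] fun ω => w ω * ((T ⁻¹' {t}).indicator (fun _ => (1 : ℝ)) ω
      * (Yt ω - (μ[Yt | m']) ω)))
    (hgint : Integrable g μ) :
    ∫ ω, g ω ∂μ = 0 := by
  have hA : MeasurableSet (T ⁻¹' {t}) := hT (measurableSet_singleton t)
  set A : Set Ω := T ⁻¹' {t} with hAdef
  set c : Ω → ℝ := μ[A.indicator (fun _ => (1 : ℝ)) | m'] with hcdef
  set d : Ω → ℝ := μ[Yt | m'] with hddef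
  have hd_sm : StronglyMeasurable[m'] d := stronglyMeasurable_condExp
  have hd_int : Integrable d μ := integrable_condExp
  have hindA_int : Integrable (A.indicator (fun _ => (1 : ℝ))) μ :=
    (integrable_const (1 : ℝ)).indicator hA
  have hind_le : ∀ ω, |A.indicator (fun _ => (1 : ℝ)) ω| ≤ 1 := by
    intro ω; by_cases h : ω ∈ A <;> simp [Set.indicator_apply, h]
  have hindYt : ∀ ω, A.indicator (fun _ => (1 : ℝ)) ω * Yt ω = A.indicator Yt ω := by
    intro ω; by_cases h : ω ∈ A <;> simp [Set.indicator_apply, h]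
  have hf1_int : Integrable (fun ω => A.indicator (fun _ => (1 : ℝ)) ω * Yt ω) μ :=
    (hint.indicator hA).congr (Filter.Eventually.of_forall fun ω => (hindYt ω).symm)
  have hf2_int : Integrable (d * A.indicator (fun _ => (1 : ℝ))) μ := by
    refine Integrable.mono' hd_int.abs
      ((hd_sm.mono hm').aestronglyMeasurable.mul
        ((stronglyMeasurable_const.indicator hA).aestronglyMeasurable)) ?_
    refine Filter.Eventually.of_forall fun ω => ?_
    rw [Pi.mul_apply, Real.norm_eq_abs, abs_mul]
    exact mul_le_of_le_one_right (abs_nonneg _) (hind_le ω)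
  have hkey := aux_condexp_indicator_mul hm' μ hYt hint hT t hucf
  have hpull2 : μ[d * A.indicator (fun _ => (1 : ℝ)) | m'] =ᵐ[μ]
      d * μ[A.indicator (fun _ => (1 : ℝ)) | m'] :=
    condExp_mul_of_stronglyMeasurable_left hd_sm hf2_int hindA_int
  have he : (fun ω => A.indicator (fun _ => (1 : ℝ)) ω * (Yt ω - d ω))
      = (fun ω => A.indicator (fun _ => (1 : ℝ)) ω * Yt ω)
        - d * A.indicator (fun _ => (1 : ℝ)) := by
    funext ω; simp only [Pi.sub_apply, Pi.mul_apply]; ring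
  have hg'_int : Integrable (fun ω => A.indicator (fun _ => (1 : ℝ)) ω * (Yt ω - d ω)) μ := by
    rw [he]; exact hf1_int.sub hf2_int
  have hsub : μ[fun ω => A.indicator (fun _ => (1 : ℝ)) ω * (Yt ω - d ω) | m'] =ᵐ[μ]
      (0 : Ω → ℝ) := by
    rw [he]
    refine (condExp_sub hf1_int hf2_int m').trans ?_
    filter_upwards [hkey, hpull2] with ω hk hp
    simp only [Pi.sub_apply, Pi.mul_apply, Pi.zero_apply]
    rw [hk, hp]
    simp only [Pi.mul_apply]
    ring
  have hwg_int : Integrable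
      (w * fun ω => A.indicator (fun _ => (1 : ℝ)) ω * (Yt ω - d ω)) μ :=
    hgint.congr hg
  have hpull : μ[w * fun ω => A.indicator (fun _ => (1 : ℝ)) ω * (Yt ω - d ω) | m'] =ᵐ[μ]
      w * μ[fun ω => A.indicator (fun _ => (1 : ℝ)) ω * (Yt ω - d ω) | m'] :=
    condExp_mul_of_stronglyMeasurable_left hw hwg_int hg'_int
  have hzero : μ[w * fun ω => A.indicator (fun _ => (1 : ℝ)) ω * (Yt ω - d ω) | m'] =ᵐ[μ]
      (0 : Ω → ℝ) := by
    refine hpull.trans ?_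
    filter_upwards [hsub] with ω h
    simp only [Pi.mul_apply, Pi.zero_apply] at h ⊢
    rw [h, mul_zero]
  calc ∫ ω, g ω ∂μ
      = ∫ ω, (w * fun ω => A.indicator (fun _ => (1 : ℝ)) ω * (Yt ω - d ω)) ω ∂μ :=
        integral_congr_ae hg
    _ = ∫ ω, (μ[w * fun ω => A.indicator (fun _ => (1 : ℝ)) ω * (Yt ω - d ω) | m']) ω ∂μ :=
        (integral_condExp hm').symm
    _ = ∫ ω, (0 : Ω → ℝ) ω ∂μ := integral_congr_ae hzero
    _ = 0 := by simp

/-- Part (b) helper: integral identity when the propensity score is correct. -/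
lemma auxB {Ω : Type*} {m' : MeasurableSpace Ω}
    [mΩ : MeasurableSpace Ω] [StandardBorelSpace Ω] (hm' : m' ≤ mΩ)
    (μ : Measure Ω) [IsProbabilityMeasure μ]
    {Yt : Ω → ℝ} (hYt : Measurable Yt) (hint : Integrable Yt μ)
    {T : Ω → Bool} (hT : Measurable T) (t : Bool)
    (hucf : CondIndepFun m' hm' Yt T μ)
    {mX : Ω → ℝ} (hmX_sm : StronglyMeasurable[m'] mX) (hmX_int : Integrable mX μ)
    (hpos : ∀ᵐ ω ∂μ, 0 < (μ[(T ⁻¹' {t}).indicator (fun _ => (1 : ℝ)) | m']) ω)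
    {g : Ω → ℝ}
    (hg : g =ᵐ[μ] fun ω => ((μ[(T ⁻¹' {t}).indicator (fun _ => (1 : ℝ)) | m']) ω)⁻¹
      * ((T ⁻¹' {t}).indicator (fun _ => (1 : ℝ)) ω * (Yt ω - mX ω)))
    (hgint : Integrable g μ) :
    ∫ ω, g ω ∂μ = ∫ ω, Yt ω ∂μ - ∫ ω, mX ω ∂μ := by
  have hA : MeasurableSet (T ⁻¹' {t}) := hT (measurableSet_singleton t)
  set A : Set Ω := T ⁻¹' {t} with hAdef
  set c : Ω → ℝ := μ[A.indicator (fun _ => (1 : ℝ)) | m'] with hcdef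
  set d : Ω → ℝ := μ[Yt | m'] with hddef
  have hc_sm : StronglyMeasurable[m'] c := stronglyMeasurable_condExp
  have hd_sm : StronglyMeasurable[m'] d := stronglyMeasurable_condExp
  have hindA_int : Integrable (A.indicator (fun _ => (1 : ℝ))) μ :=
    (integrable_const (1 : ℝ)).indicator hA
  have hind_le : ∀ ω, |A.indicator (fun _ => (1 : ℝ)) ω| ≤ 1 := by
    intro ω; by_cases h : ω ∈ A <;> simp [Set.indicator_apply, h]
  have hindYt : ∀ ω, A.indicator (fun _ => (1 : ℝ)) ω * Yt ω = A.indicator Yt ω := by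
    intro ω; by_cases h : ω ∈ A <;> simp [Set.indicator_apply, h]
  have hf1_int : Integrable (fun ω => A.indicator (fun _ => (1 : ℝ)) ω * Yt ω) μ :=
    (hint.indicator hA).congr (Filter.Eventually.of_forall fun ω => (hindYt ω).symm)
  have hf2_int : Integrable (mX * A.indicator (fun _ => (1 : ℝ))) μ := by
    refine Integrable.mono' hmX_int.abs
      ((hmX_sm.mono hm').aestronglyMeasurable.mul
        ((stronglyMeasurable_const.indicator hA).aestronglyMeasurable)) ?_
    refine Filter.Eventually.of_forall fun ω => ?_
    rw [Pi.mul_apply, Real.norm_eq_abs, abs_mul]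
    exact mul_le_of_le_one_right (abs_nonneg _) (hind_le ω)
  have hkey := aux_condexp_indicator_mul hm' μ hYt hint hT t hucf
  have hpull2 : μ[mX * A.indicator (fun _ => (1 : ℝ)) | m'] =ᵐ[μ]
      mX * μ[A.indicator (fun _ => (1 : ℝ)) | m'] :=
    condExp_mul_of_stronglyMeasurable_left hmX_sm hf2_int hindA_int
  have he : (fun ω => A.indicator (fun _ => (1 : ℝ)) ω * (Yt ω - mX ω))
      = (fun ω => A.indicator (fun _ => (1 : ℝ)) ω * Yt ω)
        - mX * A.indicator (fun _ => (1 : ℝ)) := by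
    funext ω; simp only [Pi.sub_apply, Pi.mul_apply]; ring
  have hg'_int : Integrable (fun ω => A.indicator (fun _ => (1 : ℝ)) ω * (Yt ω - mX ω)) μ := by
    rw [he]; exact hf1_int.sub hf2_int
  have hf0_sm : StronglyMeasurable[m'] (fun ω => (c ω)⁻¹) := (hc_sm.measurable.inv).stronglyMeasurable
  have hwg_int : Integrable
      ((fun ω => (c ω)⁻¹) * fun ω => A.indicator (fun _ => (1 : ℝ)) ω * (Yt ω - mX ω)) μ :=
    hgint.congr hg
  have hpull : μ[(fun ω => (c ω)⁻¹)
        * fun ω => A.indicator (fun _ => (1 : ℝ)) ω * (Yt ω - mX ω) | m'] =ᵐ[μ]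
      (fun ω => (c ω)⁻¹)
        * μ[fun ω => A.indicator (fun _ => (1 : ℝ)) ω * (Yt ω - mX ω) | m'] :=
    condExp_mul_of_stronglyMeasurable_left hf0_sm hwg_int hg'_int
  have hsub : μ[fun ω => A.indicator (fun _ => (1 : ℝ)) ω * (Yt ω - mX ω) | m'] =ᵐ[μ]
      fun ω => c ω * d ω - mX ω * c ω := by
    rw [he]
    refine (condExp_sub hf1_int hf2_int m').trans ?_
    filter_upwards [hkey, hpull2] with ω hk hp
    simp only [Pi.sub_apply, Pi.mul_apply]
    rw [hk, hp]
    simp only [Pi.mul_apply]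
    rfl
  have hfinal : μ[(fun ω => (c ω)⁻¹)
        * fun ω => A.indicator (fun _ => (1 : ℝ)) ω * (Yt ω - mX ω) | m'] =ᵐ[μ]
      fun ω => d ω - mX ω := by
    refine hpull.trans ?_
    filter_upwards [hsub, hpos] with ω h hc0
    simp only [Pi.mul_apply]
    rw [h]
    have hcne : c ω ≠ 0 := ne_of_gt hc0
    field_simp
  calc ∫ ω, g ω ∂μ
      = ∫ ω, ((fun ω => (c ω)⁻¹)
          * fun ω => A.indicator (fun _ => (1 : ℝ)) ω * (Yt ω - mX ω)) ω ∂μ :=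
        integral_congr_ae hg
    _ = ∫ ω, (μ[(fun ω => (c ω)⁻¹)
          * fun ω => A.indicator (fun _ => (1 : ℝ)) ω * (Yt ω - mX ω) | m']) ω ∂μ :=
        (integral_condExp hm').symm
    _ = ∫ ω, (d ω - mX ω) ∂μ := integral_congr_ae hfinal
    _ = ∫ ω, d ω ∂μ - ∫ ω, mX ω ∂μ := integral_sub integrable_condExp hmX_int
    _ = ∫ ω, Yt ω ∂μ - ∫ ω, mX ω ∂μ := by rw [integral_condExp hm']

end Aux

/-- double robustness of the AIPW identifying functional.
Under unconfoundedness `Y(t) ⫫ T | X`, consistency and overlap, for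
`ψ̃_t(Z) = 1{T=t}(Y − m(X))/e_t(X) + m(X)`:
(a) if `m = μ_t = E[Y(t)|X]` and `e_t` is any measurable function bounded away from 0 and 1,
then `E[ψ̃_t(Z)] = E[Y(t)]`;
(b) if `e_t(X) = P(T=t|X)` and `m` is any bounded measurable function, then
`E[ψ̃_t(Z)] = E[Y(t)]`. -/
theorem stmt_10 {Ω 𝒳 : Type*} [MeasurableSpace Ω] [StandardBorelSpace Ω] [Nonempty Ω]
    [MeasurableSpace 𝒳]
    (μ : Measure Ω) [IsProbabilityMeasure μ]
    (X : Ω → 𝒳) (hX : Measurable X)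
    (T : Ω → Bool) (hT : Measurable T) (t : Bool)
    (Yt : Ω → ℝ) (hYt : Measurable Yt)
    (hmX : MeasurableSpace.comap X inferInstance ≤ ‹MeasurableSpace Ω›)
    -- unconfoundedness: Y(t) ⫫ T | X
    (hucf : CondIndepFun (MeasurableSpace.comap X inferInstance) hmX Yt T μ)
    (pt μt : 𝒳 → ℝ)
    -- p_t(X) = P(T=t|X) and μ_t(X) = E[Y(t)|X]
    (hpt : μ[(fun ω => if T ω = t then (1 : ℝ) else 0) | MeasurableSpace.comap X inferInstance]
        =ᵐ[μ] fun ω => pt (X ω))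
    (hμt : μ[Yt | MeasurableSpace.comap X inferInstance] =ᵐ[μ] fun ω => μt (X ω))
    -- overlap
    (hover : ∀ᵐ ω ∂μ, 0 < pt (X ω) ∧ pt (X ω) < 1)
    -- consistency: the observed outcome agrees with Y(t) whenever T = t
    (Y : Ω → ℝ) (hcons : ∀ ω, T ω = t → Y ω = Yt ω)
    (hintYt : Integrable Yt μ) :
    (∀ e : 𝒳 → ℝ, Measurable e → (∃ δ > (0 : ℝ), ∀ x, δ ≤ e x ∧ e x ≤ 1 - δ) →
      ∀ ψ : Ω → ℝ,
        (∀ ω, ψ ω = (if T ω = t then (1 : ℝ) else 0) * (Y ω - μt (X ω)) / e (X ω) + μt (X ω)) →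
        Integrable ψ μ → ∫ ω, ψ ω ∂μ = ∫ ω, Yt ω ∂μ) ∧
    (∀ m : 𝒳 → ℝ, Measurable m → (∃ M, ∀ x, |m x| ≤ M) →
      ∀ ψ : Ω → ℝ,
        (∀ ω, ψ ω = (if T ω = t then (1 : ℝ) else 0) * (Y ω - m (X ω)) / pt (X ω) + m (X ω)) →
        Integrable ψ μ → ∫ ω, ψ ω ∂μ = ∫ ω, Yt ω ∂μ) := by
  have hXm' : Measurable[MeasurableSpace.comap X inferInstance] X :=
    measurable_iff_comap_le.mpr le_rfl
  have hIA : (fun ω => if T ω = t then (1 : ℝ) else 0)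
      = (T ⁻¹' {t}).indicator (fun _ => (1 : ℝ)) := by
    funext ω; by_cases h : T ω = t <;> simp [Set.indicator_apply, h]
  rw [hIA] at hpt
  have hμtX_int : Integrable (fun ω => μt (X ω)) μ := integrable_condExp.congr hμt
  have hYtint_eq : ∫ ω, μt (X ω) ∂μ = ∫ ω, Yt ω ∂μ := by
    rw [← integral_congr_ae hμt, integral_condExp hmX]
  constructor
  · rintro e he ⟨δ, hδ, hbd⟩ ψ hψ hψint
    have hw : StronglyMeasurable[MeasurableSpace.comap X inferInstance]
        (fun ω => (e (X ω))⁻¹) := ((he.inv).comp hXm').stronglyMeasurable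
    have hg : (fun ω => ψ ω - μt (X ω)) =ᵐ[μ] fun ω =>
        (e (X ω))⁻¹ * ((T ⁻¹' {t}).indicator (fun _ => (1 : ℝ)) ω
          * (Yt ω - (μ[Yt | MeasurableSpace.comap X inferInstance]) ω)) := by
      filter_upwards [hμt] with ω hdω
      rw [hψ ω, hdω]
      by_cases h : T ω = t
      · have hmem : ω ∈ T ⁻¹' {t} := by simp [h]
        rw [hcons ω h]
        simp only [h, if_true, Set.indicator_of_mem hmem]
        rw [div_eq_mul_inv]
        ring
      · have hmem : ω ∉ T ⁻¹' {t} := by simp [h]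
        simp [h, Set.indicator_of_notMem hmem]
    have h0 := auxA hmX μ hYt hintYt hT t hucf hw hg (hψint.sub hμtX_int)
    have hsplit : ∫ ω, ψ ω ∂μ
        = ∫ ω, (ψ ω - μt (X ω)) ∂μ + ∫ ω, μt (X ω) ∂μ := by
      rw [integral_sub hψint hμtX_int]
      ring
    rw [hsplit, h0, zero_add, hYtint_eq]
  · rintro m hm ⟨M, hM⟩ ψ hψ hψint
    have hmX_sm : StronglyMeasurable[MeasurableSpace.comap X inferInstance]
        (fun ω => m (X ω)) := (hm.comp hXm').stronglyMeasurable
    have hmX_int : Integrable (fun ω => m (X ω)) μ :=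
      Integrable.mono' (integrable_const M) (hm.comp hX).aestronglyMeasurable
        (Filter.Eventually.of_forall fun ω => by rw [Real.norm_eq_abs]; exact hM _)
    have hpos : ∀ᵐ ω ∂μ, 0 <
        (μ[(T ⁻¹' {t}).indicator (fun _ => (1 : ℝ)) |
          MeasurableSpace.comap X inferInstance]) ω := by
      filter_upwards [hpt, hover] with ω h1 h2
      rw [h1]; exact h2.1
    have hg : (fun ω => ψ ω - m (X ω)) =ᵐ[μ] fun ω =>
        ((μ[(T ⁻¹' {t}).indicator (fun _ => (1 : ℝ)) |
          MeasurableSpace.comap X inferInstance]) ω)⁻¹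
          * ((T ⁻¹' {t}).indicator (fun _ => (1 : ℝ)) ω * (Yt ω - m (X ω))) := by
      filter_upwards [hpt] with ω hcω
      rw [hψ ω, hcω]
      by_cases h : T ω = t
      · have hmem : ω ∈ T ⁻¹' {t} := by simp [h]
        rw [hcons ω h]
        simp only [h, if_true, Set.indicator_of_mem hmem]
        rw [div_eq_mul_inv]
        ring
      · have hmem : ω ∉ T ⁻¹' {t} := by simp [h]
        simp [h, Set.indicator_of_notMem hmem]
    have hB := auxB hmX μ hYt hintYt hT t hucf hmX_sm hmX_int hpos hg (hψint.sub hmX_int)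
    have hsplit : ∫ ω, ψ ω ∂μ
        = ∫ ω, (ψ ω - m (X ω)) ∂μ + ∫ ω, m (X ω) ∂μ := by
      rw [integral_sub hψint hmX_int]
      ring
    rw [hsplit, hB]
    ring
end

section
/- Under unconfoundedness Y(0) ⫫ T | X, consistency, overlap P(T=0|X) > 0 a.s., and P(T=1) > 0, the ATT transformation ψ_{t,1}(Z) = [P(T=1|X)/P(T=1)] · 1{T=t}(Y − μ_t(X))/P(T=t|X) + 1{T=1} μ_t(X)/P(T=1) satisfies E[ψ_{0,1}(Z)] = E[Y(0) | T = 1], and E[ψ_{1,1}(Z)] = E[Y(1) | T = 1], so that E[ψ_{1,1}(Z) − ψ_{0,1}(Z)] = τ_t := E[Y(1) − Y(0) | T=1]. -/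
open MeasureTheory ProbabilityTheory Filter Topology

section Aux

variable {Ω : Type*} {m : MeasurableSpace Ω} [mΩ : MeasurableSpace Ω]
  {μ : Measure Ω} [IsProbabilityMeasure μ]

/-- For a bounded `m`-measurable weight `w`, `∫ w·f = ∫ w·E[f|m]`. -/
lemma att_aux_W (hm : m ≤ mΩ) {w f : Ω → ℝ} {C : ℝ}
    (hw : StronglyMeasurable[m] w) (hwb : ∀ᵐ ω ∂μ, ‖w ω‖ ≤ C) (hf : Integrable f μ) :
    ∫ ω, w ω * f ω ∂μ = ∫ ω, w ω * (μ[f|m]) ω ∂μ := by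
  have hwm : AEStronglyMeasurable w μ := (hw.mono hm).aestronglyMeasurable
  have hwf : Integrable (w * f) μ := hf.bdd_mul hwm hwb
  calc ∫ ω, w ω * f ω ∂μ = ∫ ω, (w * f) ω ∂μ := rfl
    _ = ∫ ω, (μ[w * f|m]) ω ∂μ := (integral_condExp hm).symm
    _ = ∫ ω, (w * μ[f|m]) ω ∂μ :=
        integral_congr_ae (condExp_mul_of_stronglyMeasurable_left hw hwf hf)
    _ = ∫ ω, w ω * (μ[f|m]) ω ∂μ := rfl

/-- Pull-out property from conditional independence:
`E[1_{T = true}·f | m] = E[f|m] · P(T = true | m)`. -/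
lemma att_aux_L [StandardBorelSpace Ω] (hm : m ≤ mΩ)
    {f : Ω → ℝ} {T : Ω → Bool} (hfm : Measurable f) (hTm : Measurable T)
    (hfi : Integrable f μ) (hind : CondIndepFun m hm f T μ) :
    μ[(T ⁻¹' {true}).indicator f | m] =ᵐ[μ]
      μ[f|m] * μ[(T ⁻¹' {true}).indicator (fun _ => (1 : ℝ)) | m] := by
  set B : Set Ω := T ⁻¹' {true} with hBdef
  have hB : MeasurableSet B := hTm (measurableSet_singleton true)
  set q : Ω → ℝ := μ[B.indicator (fun _ => (1 : ℝ)) | m] with hqdef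
  have hq_sm : StronglyMeasurable[m] q := stronglyMeasurable_condExp
  have hq_meas : Measurable q := (hq_sm.mono hm).measurable
  have hind_one : Integrable (B.indicator (fun _ => (1 : ℝ))) μ :=
    (integrable_const (1 : ℝ)).indicator hB
  have hq01 : ∀ᵐ ω ∂μ, 0 ≤ q ω ∧ q ω ≤ 1 := by
    have h1 : 0 ≤ᵐ[μ] q :=
      condExp_nonneg (ae_of_all _ fun ω => Set.indicator_nonneg (fun _ _ => zero_le_one) ω)
    have hle : B.indicator (fun _ => (1 : ℝ)) ≤ᵐ[μ] fun _ => (1 : ℝ) := by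
      refine ae_of_all _ fun ω => ?_
      by_cases h : ω ∈ B <;> simp [Set.indicator_apply, h]
    have h2 : q ≤ᵐ[μ] μ[(fun _ : Ω => (1 : ℝ))|m] :=
      condExp_mono hind_one (integrable_const 1) hle
    rw [condExp_const hm (1 : ℝ)] at h2
    filter_upwards [h1, h2] with ω hω1 hω2 using ⟨hω1, hω2⟩
  have hqb : ∀ᵐ ω ∂μ, ‖q ω‖ ≤ 1 := by
    filter_upwards [hq01] with ω h
    rw [Real.norm_eq_abs, abs_le]; exact ⟨by linarith [h.1], h.2⟩
  have hAind : ∀ (A : Set Ω) (ω : Ω), ‖q ω‖ ≤ 1 → ‖A.indicator q ω‖ ≤ 1 := by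
    intro A ω h
    classical
    by_cases hω : ω ∈ A
    · simpa [Set.indicator_apply, hω] using h
    · simp [Set.indicator_apply, hω]
  -- base case: indicators of preimages under `f`
  have base : ∀ u : Set ℝ, MeasurableSet u → ∀ A : Set Ω, MeasurableSet[m] A →
      ∫ ω, (A.indicator (fun _ => (1 : ℝ)) ω * B.indicator (fun _ => (1 : ℝ)) ω) *
          (f ⁻¹' u).indicator (fun _ => (1 : ℝ)) ω ∂μ
        = ∫ ω, A.indicator q ω * (f ⁻¹' u).indicator (fun _ => (1 : ℝ)) ω ∂μ := by
    intro u hu A hA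
    have hindu : Integrable ((f ⁻¹' u).indicator (fun _ => (1 : ℝ))) μ :=
      (integrable_const 1).indicator (hfm hu)
    have hw2 : StronglyMeasurable[m] (A.indicator q) := hq_sm.indicator hA
    have hw2b : ∀ᵐ ω ∂μ, ‖A.indicator q ω‖ ≤ 1 := by
      filter_upwards [hqb] with ω h using hAind A ω h
    rw [att_aux_W hm hw2 hw2b hindu]
    have hmul := (condIndepFun_iff_condExp_inter_preimage_eq_mul hfm hTm).mp hind
      u {true} hu (measurableSet_singleton true)
    have e1 : (fun ω => (A.indicator (fun _ => (1 : ℝ)) ω * B.indicator (fun _ => (1 : ℝ)) ω) *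
        (f ⁻¹' u).indicator (fun _ => (1 : ℝ)) ω)
        = A.indicator ((f ⁻¹' u ∩ B).indicator (fun _ => (1 : ℝ))) := by
      funext ω
      by_cases h1 : ω ∈ A <;> by_cases h2 : ω ∈ B <;> by_cases h3 : ω ∈ f ⁻¹' u <;>
        simp [Set.indicator_apply, h1, h2, h3]
    rw [e1, integral_indicator (hm A hA)]
    rw [← setIntegral_condExp hm ((integrable_const (1 : ℝ)).indicator ((hfm hu).inter hB)) hA]
    rw [setIntegral_congr_ae (hm A hA) (hmul.mono fun ω hω _ => hω)]
    rw [← integral_indicator (hm A hA)]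
    congr 1
    funext ω
    by_cases h : ω ∈ A <;>
      simp [Set.indicator_apply, h, mul_comm] <;> exact Or.inl rfl
  -- simple function level
  have simp_level : ∀ A : Set Ω, MeasurableSet[m] A → ∀ φ : SimpleFunc ℝ ℝ,
      ∫ ω, (A.indicator (fun _ => (1 : ℝ)) ω * B.indicator (fun _ => (1 : ℝ)) ω) * φ (f ω) ∂μ
        = ∫ ω, A.indicator q ω * φ (f ω) ∂μ := by
    intro A hA φ
    have hW1meas : Measurable fun ω =>
        A.indicator (fun _ => (1 : ℝ)) ω * B.indicator (fun _ => (1 : ℝ)) ω :=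
      (measurable_const.indicator (hm A hA)).mul (measurable_const.indicator hB)
    have hW1b : ∀ ω, ‖A.indicator (fun _ => (1 : ℝ)) ω * B.indicator (fun _ => (1 : ℝ)) ω‖ ≤ 1 := by
      intro ω
      by_cases h1 : ω ∈ A <;> by_cases h2 : ω ∈ B <;> simp [Set.indicator_apply, h1, h2]
    have hW2meas : Measurable (A.indicator q) := hq_meas.indicator (hm A hA)
    have intW1 : ∀ ψ : SimpleFunc ℝ ℝ,
        Integrable (fun ω => (A.indicator (fun _ => (1 : ℝ)) ω *
          B.indicator (fun _ => (1 : ℝ)) ω) * ψ (f ω)) μ := by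
      intro ψ
      obtain ⟨C, hC⟩ := ψ.exists_forall_norm_le
      refine Integrable.mono' (integrable_const C) ?_ (ae_of_all _ fun ω => ?_)
      · exact (hW1meas.mul (ψ.measurable.comp hfm)).aestronglyMeasurable
      · calc ‖_ * ψ (f ω)‖ = ‖_‖ * ‖ψ (f ω)‖ := norm_mul _ _
          _ ≤ 1 * C := mul_le_mul (hW1b ω) (hC _) (norm_nonneg _) zero_le_one
          _ = C := one_mul C
    have intW2 : ∀ ψ : SimpleFunc ℝ ℝ,
        Integrable (fun ω => A.indicator q ω * ψ (f ω)) μ := by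
      intro ψ
      obtain ⟨C, hC⟩ := ψ.exists_forall_norm_le
      refine Integrable.mono' (integrable_const C) ?_ ?_
      · exact (hW2meas.mul (ψ.measurable.comp hfm)).aestronglyMeasurable
      · filter_upwards [hqb] with ω hq
        have hb : ‖A.indicator q ω‖ ≤ 1 := hAind A ω hq
        calc ‖A.indicator q ω * ψ (f ω)‖ = ‖A.indicator q ω‖ * ‖ψ (f ω)‖ := norm_mul _ _
          _ ≤ 1 * C := mul_le_mul hb (hC _) (norm_nonneg _) zero_le_one
          _ = C := one_mul C
    induction φ using SimpleFunc.induction with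
    | @const c u hu =>
      have hφval : ∀ ω, (SimpleFunc.piecewise u hu (SimpleFunc.const ℝ c)
          (SimpleFunc.const ℝ 0)) (f ω) = c * (f ⁻¹' u).indicator (fun _ => (1 : ℝ)) ω := by
        intro ω
        by_cases h : f ω ∈ u <;>
          simp [SimpleFunc.piecewise_apply, Set.indicator_apply, h, Set.mem_preimage]
      simp_rw [hφval, show ∀ a b : ℝ, a * (c * b) = c * (a * b) by intros; ring,
        integral_const_mul]
      rw [base u hu A hA]
    | @add φ ψ hdisj hφ hψ =>
      simp_rw [SimpleFunc.coe_add, Pi.add_apply, mul_add]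
      rw [integral_add (intW1 φ) (intW1 ψ), integral_add (intW2 φ) (intW2 ψ), hφ, hψ]
  -- limit: the identity for `f` itself
  have main : ∀ A : Set Ω, MeasurableSet[m] A →
      ∫ ω in A, B.indicator f ω ∂μ = ∫ ω, A.indicator q ω * f ω ∂μ := by
    intro A hA
    set s : ℕ → SimpleFunc ℝ ℝ :=
      fun n => SimpleFunc.approxOn id measurable_id Set.univ 0 (Set.mem_univ 0) n with hsdef
    have hsn : ∀ n x, ‖s n x‖ ≤ ‖x‖ + ‖x‖ := fun n x =>
      SimpleFunc.norm_approxOn_zero_le measurable_id (Set.mem_univ 0) x n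
    have hstend : ∀ x : ℝ, Tendsto (fun n => s n x) atTop (𝓝 x) := fun x =>
      SimpleFunc.tendsto_approxOn measurable_id (Set.mem_univ 0) (by simp)
    have hW1meas : Measurable fun ω =>
        A.indicator (fun _ => (1 : ℝ)) ω * B.indicator (fun _ => (1 : ℝ)) ω :=
      (measurable_const.indicator (hm A hA)).mul (measurable_const.indicator hB)
    have hW1b : ∀ ω, ‖A.indicator (fun _ => (1 : ℝ)) ω * B.indicator (fun _ => (1 : ℝ)) ω‖ ≤ 1 := by
      intro ω
      by_cases h1 : ω ∈ A <;> by_cases h2 : ω ∈ B <;> simp [Set.indicator_apply, h1, h2]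
    have hW2meas : Measurable (A.indicator q) := hq_meas.indicator (hm A hA)
    have hbound : Integrable (fun ω => ‖f ω‖ + ‖f ω‖) μ := hfi.norm.add hfi.norm
    have t1 : Tendsto (fun n => ∫ ω, (A.indicator (fun _ => (1 : ℝ)) ω *
        B.indicator (fun _ => (1 : ℝ)) ω) * (s n) (f ω) ∂μ) atTop
        (𝓝 (∫ ω, (A.indicator (fun _ => (1 : ℝ)) ω *
          B.indicator (fun _ => (1 : ℝ)) ω) * f ω ∂μ)) := by
      refine tendsto_integral_of_dominated_convergence _ ?_ hbound ?_ ?_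
      · intro n
        exact (hW1meas.mul ((s n).measurable.comp hfm)).aestronglyMeasurable
      · intro n
        refine ae_of_all _ fun ω => ?_
        calc ‖_ * (s n) (f ω)‖ = ‖_‖ * ‖(s n) (f ω)‖ := norm_mul _ _
          _ ≤ 1 * (‖f ω‖ + ‖f ω‖) :=
              mul_le_mul (hW1b ω) (hsn n (f ω)) (norm_nonneg _) zero_le_one
          _ = ‖f ω‖ + ‖f ω‖ := one_mul _
      · refine ae_of_all _ fun ω => ?_
        exact (hstend (f ω)).const_mul _
    have t2 : Tendsto (fun n => ∫ ω, A.indicator q ω * (s n) (f ω) ∂μ) atTop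
        (𝓝 (∫ ω, A.indicator q ω * f ω ∂μ)) := by
      refine tendsto_integral_of_dominated_convergence _ ?_ hbound ?_ ?_
      · intro n
        exact (hW2meas.mul ((s n).measurable.comp hfm)).aestronglyMeasurable
      · intro n
        filter_upwards [hqb] with ω hq
        have hb : ‖A.indicator q ω‖ ≤ 1 := hAind A ω hq
        calc ‖A.indicator q ω * (s n) (f ω)‖
            = ‖A.indicator q ω‖ * ‖(s n) (f ω)‖ := norm_mul _ _
          _ ≤ 1 * (‖f ω‖ + ‖f ω‖) :=
              mul_le_mul hb (hsn n (f ω)) (norm_nonneg _) zero_le_one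
          _ = ‖f ω‖ + ‖f ω‖ := one_mul _
      · refine ae_of_all _ fun ω => ?_
        exact (hstend (f ω)).const_mul _
    have heq : (fun n => ∫ ω, (A.indicator (fun _ => (1 : ℝ)) ω *
        B.indicator (fun _ => (1 : ℝ)) ω) * (s n) (f ω) ∂μ)
        = fun n => ∫ ω, A.indicator q ω * (s n) (f ω) ∂μ :=
      funext fun n => simp_level A hA (s n)
    have hlim : ∫ ω, (A.indicator (fun _ => (1 : ℝ)) ω *
        B.indicator (fun _ => (1 : ℝ)) ω) * f ω ∂μ = ∫ ω, A.indicator q ω * f ω ∂μ :=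
      tendsto_nhds_unique (heq ▸ t1) t2
    rw [← hlim, ← integral_indicator (hm A hA)]
    congr 1
    funext ω
    by_cases h1 : ω ∈ A <;> by_cases h2 : ω ∈ B <;>
      simp [Set.indicator_apply, h1, h2]
  -- conclude via the characterization of the conditional expectation
  have hg_int : Integrable (μ[f|m] * q) μ := by
    have h0 : Integrable (fun ω => q ω * (μ[f|m]) ω) μ :=
      integrable_condExp.bdd_mul (hq_meas.aestronglyMeasurable) hqb
    exact h0.congr (ae_of_all _ fun ω => mul_comm _ _)
  refine (ae_eq_condExp_of_forall_setIntegral_eq hm (hfi.indicator hB)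
    (fun A hA _ => hg_int.integrableOn)
    (fun A hA _ => ?_)
    ((stronglyMeasurable_condExp.mul hq_sm).aestronglyMeasurable)).symm
  -- ⊢ ∫ ω in A, (μ[f|m] * q) ω ∂μ = ∫ ω in A, B.indicator f ω ∂μ
  have hw2 : StronglyMeasurable[m] (A.indicator q) := hq_sm.indicator hA
  have hw2b : ∀ᵐ ω ∂μ, ‖A.indicator q ω‖ ≤ 1 := by
    filter_upwards [hqb] with ω h using hAind A ω h
  rw [main A hA, att_aux_W hm hw2 hw2b hfi, ← integral_indicator (hm A hA)]
  congr 1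
  funext ω
  by_cases h : ω ∈ A <;> simp [Set.indicator_apply, h, mul_comm]

end Aux

/-- Main computation, stated for a generic sub-σ-algebra. -/
lemma att_main {Ω : Type*} {m : MeasurableSpace Ω} [mΩ : MeasurableSpace Ω]
    [StandardBorelSpace Ω]
    (μ : Measure Ω) [IsProbabilityMeasure μ] (hm : m ≤ mΩ)
    (T : Ω → Bool) (hT : Measurable T)
    (Y0 Y1 : Ω → ℝ) (hY0 : Measurable Y0)
    (hucf0 : CondIndepFun m hm Y0 T μ)
    (pX m1X m0X : Ω → ℝ)
    (hp : μ[(fun ω => if T ω then (1 : ℝ) else 0)|m] =ᵐ[μ] pX)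
    (hμ0 : μ[Y0|m] =ᵐ[μ] m0X)
    (hover : ∀ᵐ ω ∂μ, 0 ≤ pX ω ∧ pX ω < 1)
    (hT1 : 0 < μ {ω | T ω = true})
    (Y : Ω → ℝ) (hYdef : ∀ ω, Y ω = if T ω then Y1 ω else Y0 ω)
    (P1 : ℝ) (hP1 : P1 = (μ {ω | T ω = true}).toReal)
    (ψ11 ψ01 : Ω → ℝ)
    (hψ11 : ∀ ω, ψ11 ω =
      (pX ω / P1) * ((if T ω then (1 : ℝ) else 0) * (Y ω - m1X ω) / pX ω) +
        (if T ω then (1 : ℝ) else 0) * m1X ω / P1)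
    (hψ01 : ∀ ω, ψ01 ω =
      (pX ω / P1) * ((if T ω then (0 : ℝ) else 1) * (Y ω - m0X ω) / (1 - pX ω)) +
        (if T ω then (1 : ℝ) else 0) * m0X ω / P1)
    (hintY0 : Integrable Y0 μ) (hintY1 : Integrable Y1 μ)
    (hintψ01 : Integrable ψ01 μ) (hintψ11 : Integrable ψ11 μ) :
    (∫ ω, ψ01 ω ∂μ = ∫ ω, Y0 ω ∂(ProbabilityTheory.cond μ {ω | T ω = true})) ∧
    (∫ ω, ψ11 ω ∂μ = ∫ ω, Y1 ω ∂(ProbabilityTheory.cond μ {ω | T ω = true})) ∧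
    (∫ ω, (ψ11 ω - ψ01 ω) ∂μ =
      ∫ ω, (Y1 ω - Y0 ω) ∂(ProbabilityTheory.cond μ {ω | T ω = true})) := by
  classical
  set I : Ω → ℝ := fun ω => if T ω then (1 : ℝ) else 0 with hIdef
  have hBmeas : MeasurableSet (T ⁻¹' {true}) := hT (measurableSet_singleton true)
  have hBset : {ω | T ω = true} = T ⁻¹' {true} := rfl
  have hμB_ne : μ {ω | T ω = true} ≠ ⊤ := measure_ne_top _ _
  have hP1pos : 0 < P1 := by rw [hP1]; exact ENNReal.toReal_pos hT1.ne' hμB_ne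
  have hP1ne : P1 ≠ 0 := hP1pos.ne'
  -- integral with respect to the conditional measure
  have hcondint : ∀ g : Ω → ℝ,
      ∫ ω, g ω ∂(ProbabilityTheory.cond μ {ω | T ω = true})
        = P1⁻¹ * ∫ ω in {ω | T ω = true}, g ω ∂μ := by
    intro g
    rw [show ProbabilityTheory.cond μ {ω | T ω = true}
      = (μ {ω | T ω = true})⁻¹ • μ.restrict {ω | T ω = true} from rfl]
    rw [integral_smul_measure, smul_eq_mul, ENNReal.toReal_inv, hP1]
  have hIeq : I = (T ⁻¹' {true}).indicator (fun _ => (1 : ℝ)) := by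
    funext ω
    by_cases h : T ω = true <;> simp [hIdef, Set.indicator_apply, h]
  have hImeas : Measurable I := by rw [hIeq]; exact measurable_const.indicator hBmeas
  have hIint : Integrable I μ := by rw [hIeq]; exact (integrable_const 1).indicator hBmeas
  have hIbdd : ∀ ω, ‖I ω‖ ≤ 1 := by
    intro ω; by_cases h : T ω = true <;> simp [hIdef, h]
  set phat : Ω → ℝ := μ[I|m] with hphatdef
  set m0hat : Ω → ℝ := μ[Y0|m] with hm0def
  have hpae : phat =ᵐ[μ] pX := hp
  -- positivity of p on the treated
  have hphat_nonneg : ∀ᵐ ω ∂μ, 0 ≤ phat ω := by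
    filter_upwards [hpae, hover] with ω h1 h2
    rw [h1]; exact h2.1
  have hphat_m : Measurable[m] phat := stronglyMeasurable_condExp.measurable
  have hN : MeasurableSet[m] {ω | phat ω ≤ 0} := hphat_m measurableSet_Iic
  have hTpos : ∀ᵐ ω ∂μ, T ω = true → 0 < phat ω := by
    have h1 : ∫ ω in {ω | phat ω ≤ 0}, I ω ∂μ = ∫ ω in {ω | phat ω ≤ 0}, phat ω ∂μ :=
      (setIntegral_condExp hm hIint hN).symm
    have h2 : ∫ ω in {ω | phat ω ≤ 0}, phat ω ∂μ = 0 := by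
      have hae : ∀ᵐ ω ∂(μ.restrict {ω | phat ω ≤ 0}), phat ω = 0 := by
        rw [ae_restrict_iff' (hm _ hN)]
        filter_upwards [hphat_nonneg] with ω hge hmem
        exact le_antisymm hmem hge
      calc ∫ ω in {ω | phat ω ≤ 0}, phat ω ∂μ
          = ∫ _ω in {ω | phat ω ≤ 0}, (0 : ℝ) ∂μ := integral_congr_ae hae
        _ = 0 := by simp
    have hnn : 0 ≤ᵐ[μ.restrict {ω | phat ω ≤ 0}] I :=
      ae_restrict_of_ae (ae_of_all _ fun ω => by
        by_cases h : T ω = true <;> simp [hIdef, h])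
    have hI0 : I =ᵐ[μ.restrict {ω | phat ω ≤ 0}] 0 :=
      (integral_eq_zero_iff_of_nonneg_ae hnn hIint.integrableOn).mp (h1.trans h2)
    have hI0' : ∀ᵐ ω ∂μ, ω ∈ {ω | phat ω ≤ 0} → I ω = 0 :=
      (ae_restrict_iff' (hm _ hN)).mp hI0
    filter_upwards [hI0', hphat_nonneg] with ω hω hnn2 hTω
    rcases lt_or_eq_of_le hnn2 with h | h
    · exact h
    · exfalso
      have hmem : ω ∈ {ω | phat ω ≤ 0} := by simp [← h]
      have := hω hmem
      simp [hIdef, hTω] at this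
  have hTppos : ∀ᵐ ω ∂μ, T ω = true → 0 < pX ω := by
    filter_upwards [hTpos, hpae] with ω h1 h2 hTω
    rw [← h2]; exact h1 hTω
  -- ψ11 part
  have hψ11ae : ψ11 =ᵐ[μ] fun ω => I ω * Y1 ω / P1 := by
    filter_upwards [hTppos] with ω hω
    rw [hψ11 ω, hYdef ω]
    by_cases h : T ω = true
    · have hp0 : pX ω ≠ 0 := (hω h).ne'
      simp only [h, if_true, hIdef]
      field_simp
      ring
    · simp [hIdef, h]
  have e11 : ∫ ω, ψ11 ω ∂μ = P1⁻¹ * ∫ ω in {ω | T ω = true}, Y1 ω ∂μ := by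
    rw [integral_congr_ae hψ11ae, integral_div]
    have hind : (fun ω => I ω * Y1 ω) = {ω | T ω = true}.indicator Y1 := by
      funext ω
      by_cases h : T ω = true <;> simp [hIdef, Set.indicator_apply, h]
    rw [hind, hBset, integral_indicator hBmeas, div_eq_inv_mul, ← hBset]
  -- ψ01 part
  set Zhat : Ω → ℝ := fun ω => (1 - I ω) * (Y0 ω - m0hat ω) with hZdef
  have hsub_int : Integrable (fun ω => Y0 ω - m0hat ω) μ := hintY0.sub integrable_condExp
  have h1mI : ∀ ω, ‖1 - I ω‖ ≤ 1 := by
    intro ω; by_cases h : T ω = true <;> simp [hIdef, h]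
  have hZint : Integrable Zhat μ :=
    hsub_int.bdd_mul ((measurable_const.sub hImeas).aestronglyMeasurable)
      (ae_of_all _ h1mI)
  have hIY0int : Integrable (fun ω => I ω * Y0 ω) μ :=
    hintY0.bdd_mul hImeas.aestronglyMeasurable (ae_of_all _ hIbdd)
  have hm0Iint : Integrable (fun ω => m0hat ω * I ω) μ := by
    have h0 : Integrable (fun ω => I ω * m0hat ω) μ :=
      integrable_condExp.bdd_mul hImeas.aestronglyMeasurable (ae_of_all _ hIbdd)
    exact h0.congr (ae_of_all _ fun ω => mul_comm _ _)
  -- conditional-independence pull-out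
  have hL := att_aux_L (μ := μ) hm hY0 hT hintY0 hucf0
  have hIY0eq : (T ⁻¹' {true}).indicator Y0 = fun ω => I ω * Y0 ω := by
    funext ω
    by_cases h : T ω = true <;> simp [hIdef, Set.indicator_apply, h]
  have hL' : μ[(fun ω => I ω * Y0 ω)|m] =ᵐ[μ] m0hat * phat := by
    rw [← hIY0eq]
    have h1 : μ[(T ⁻¹' {true}).indicator (fun _ => (1 : ℝ))|m] = phat := by rw [← hIeq]
    rw [h1] at hL
    exact hL
  have hIm0 : μ[(fun ω => m0hat ω * I ω)|m] =ᵐ[μ] m0hat * phat :=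
    condExp_mul_of_stronglyMeasurable_left stronglyMeasurable_condExp hm0Iint hIint
  have hm0fix : μ[m0hat|m] = m0hat :=
    condExp_of_stronglyMeasurable hm stronglyMeasurable_condExp integrable_condExp
  have hZcond : μ[Zhat|m] =ᵐ[μ] 0 := by
    have hdecomp : Zhat = fun ω => (Y0 ω - m0hat ω) - (I ω * Y0 ω - m0hat ω * I ω) := by
      funext ω; simp only [hZdef]; ring
    have c1 : μ[(fun ω => Y0 ω - m0hat ω)|m] =ᵐ[μ] m0hat - m0hat := by
      have h := condExp_sub (μ := μ) (m := m) (f := Y0) (g := m0hat) hintY0 integrable_condExp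
      rw [hm0fix] at h
      exact h
    have c2 : μ[(fun ω => I ω * Y0 ω - m0hat ω * I ω)|m]
        =ᵐ[μ] (m0hat * phat) - (m0hat * phat) := by
      have h := condExp_sub (μ := μ) (m := m) hIY0int hm0Iint
      exact h.trans (hL'.sub hIm0)
    have c3 : μ[Zhat|m] =ᵐ[μ]
        μ[(fun ω => Y0 ω - m0hat ω)|m] - μ[(fun ω => I ω * Y0 ω - m0hat ω * I ω)|m] := by
      rw [hdecomp]
      exact condExp_sub hsub_int (hIY0int.sub hm0Iint) m
    filter_upwards [c1, c2, c3] with ω h1 h2 h3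
    simp only [Pi.sub_apply, Pi.mul_apply, Pi.zero_apply] at h1 h2 h3 ⊢
    rw [h3, h1, h2]; ring
  set hhat : Ω → ℝ := fun ω => (phat ω / P1) / (1 - phat ω) with hhdef
  have hhsm : StronglyMeasurable[m] hhat :=
    Measurable.stronglyMeasurable
      ((hphat_m.div measurable_const).div (measurable_const.sub hphat_m))
  have hhZ_eq : (fun ω => hhat ω * Zhat ω) =ᵐ[μ] fun ω => ψ01 ω - I ω * m0hat ω / P1 := by
    filter_upwards [hpae, hμ0] with ω hpω hμ0ω
    rw [hψ01 ω, hYdef ω]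
    by_cases h : T ω = true
    · simp only [hhdef, hZdef, hIdef, h, if_true]
      rw [hμ0ω]
      ring
    · have h' : T ω = false := by simpa using h
      simp only [hhdef, hZdef, hIdef, h', Bool.false_eq_true, if_false]
      rw [hpω, hμ0ω]
      ring
  have hIm0P1int : Integrable (fun ω => I ω * m0hat ω / P1) μ := by
    have h0 : Integrable (fun ω => I ω * m0hat ω) μ :=
      integrable_condExp.bdd_mul hImeas.aestronglyMeasurable (ae_of_all _ hIbdd)
    exact h0.div_const P1
  have hhZint : Integrable (fun ω => hhat ω * Zhat ω) μ :=
    (hintψ01.sub hIm0P1int).congr hhZ_eq.symm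
  have hintzero : ∫ ω, hhat ω * Zhat ω ∂μ = 0 := by
    have h1 : ∫ ω, hhat ω * Zhat ω ∂μ
        = ∫ ω, (μ[(fun ω => hhat ω * Zhat ω)|m]) ω ∂μ := (integral_condExp hm).symm
    have h2 : μ[(fun ω => hhat ω * Zhat ω)|m] =ᵐ[μ] fun ω => hhat ω * (μ[Zhat|m]) ω :=
      condExp_mul_of_stronglyMeasurable_left hhsm hhZint hZint
    have h3 : (fun ω => hhat ω * (μ[Zhat|m]) ω) =ᵐ[μ] fun _ => (0 : ℝ) := by
      filter_upwards [hZcond] with ω hω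
      simp only [Pi.zero_apply] at hω
      simp [hω]
    rw [h1, integral_congr_ae (h2.trans h3), integral_zero]
  have hIm0_eq : ∫ ω, I ω * m0hat ω ∂μ = ∫ ω in {ω | T ω = true}, Y0 ω ∂μ := by
    have a1 : ∫ ω, I ω * m0hat ω ∂μ = ∫ ω, (m0hat * phat) ω ∂μ := by
      calc ∫ ω, I ω * m0hat ω ∂μ = ∫ ω, m0hat ω * I ω ∂μ :=
            integral_congr_ae (ae_of_all _ fun ω => mul_comm _ _)
        _ = ∫ ω, (μ[(fun ω => m0hat ω * I ω)|m]) ω ∂μ := (integral_condExp hm).symm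
        _ = ∫ ω, (m0hat * phat) ω ∂μ := integral_congr_ae hIm0
    have a2 : ∫ ω, I ω * Y0 ω ∂μ = ∫ ω, (m0hat * phat) ω ∂μ := by
      calc ∫ ω, I ω * Y0 ω ∂μ
          = ∫ ω, (μ[(fun ω => I ω * Y0 ω)|m]) ω ∂μ := (integral_condExp hm).symm
        _ = ∫ ω, (m0hat * phat) ω ∂μ := integral_congr_ae hL'
    have a3 : ∫ ω, I ω * Y0 ω ∂μ = ∫ ω in {ω | T ω = true}, Y0 ω ∂μ := by
      rw [← hIY0eq, integral_indicator hBmeas, hBset]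
    rw [a1, ← a2, a3]
  have hψ01ae : ψ01 =ᵐ[μ] fun ω => hhat ω * Zhat ω + I ω * m0hat ω / P1 := by
    filter_upwards [hhZ_eq] with ω hω
    rw [hω]; ring
  have e01 : ∫ ω, ψ01 ω ∂μ = P1⁻¹ * ∫ ω in {ω | T ω = true}, Y0 ω ∂μ := by
    rw [integral_congr_ae hψ01ae, integral_add hhZint hIm0P1int, hintzero, zero_add]
    rw [integral_div, hIm0_eq, div_eq_inv_mul]
  -- conclusion
  have hY1res : Integrable Y1 (μ.restrict {ω | T ω = true}) := hintY1.restrict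
  have hY0res : Integrable Y0 (μ.restrict {ω | T ω = true}) := hintY0.restrict
  refine ⟨?_, ?_, ?_⟩
  · rw [hcondint Y0, e01]
  · rw [hcondint Y1, e11]
  · rw [integral_sub hintψ11 hintψ01, hcondint (fun ω => Y1 ω - Y0 ω)]
    rw [integral_sub hY1res hY0res, e11, e01]
    ring

/-- identification of the ATT via AIPW. Under `Y(0) ⫫ T | X`, consistency,
overlap `P(T=0|X) > 0` a.s. and `P(T=1) > 0`, the transformations
`ψ_{t,1}(Z) = [P(T=1|X)/P(T=1)]·1{T=t}(Y − μ_t(X))/P(T=t|X) + 1{T=1}μ_t(X)/P(T=1)`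
satisfy `E[ψ_{0,1}] = E[Y(0)|T=1]`, `E[ψ_{1,1}] = E[Y(1)|T=1]`, hence
`E[ψ_{1,1} − ψ_{0,1}] = τ_t = E[Y(1) − Y(0)|T=1]`. -/
theorem stmt_11 {Ω 𝒳 : Type*} [MeasurableSpace Ω] [StandardBorelSpace Ω] [Nonempty Ω]
    [MeasurableSpace 𝒳]
    (μ : Measure Ω) [IsProbabilityMeasure μ]
    (X : Ω → 𝒳) (hX : Measurable X)
    (T : Ω → Bool) (hT : Measurable T)
    (Y0 Y1 : Ω → ℝ) (hY0 : Measurable Y0) (hY1 : Measurable Y1)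
    (hmX : MeasurableSpace.comap X inferInstance ≤ ‹MeasurableSpace Ω›)
    -- unconfoundedness: Y(0) ⫫ T | X
    (hucf0 : CondIndepFun (MeasurableSpace.comap X inferInstance) hmX Y0 T μ)
    (p μ1 μ0 : 𝒳 → ℝ)
    -- p(X) = P(T=1|X), μ_t(X) = E[Y(t)|X]
    (hp : μ[(fun ω => if T ω then (1 : ℝ) else 0) | MeasurableSpace.comap X inferInstance]
        =ᵐ[μ] fun ω => p (X ω))
    (hμ1 : μ[Y1 | MeasurableSpace.comap X inferInstance] =ᵐ[μ] fun ω => μ1 (X ω))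
    (hμ0 : μ[Y0 | MeasurableSpace.comap X inferInstance] =ᵐ[μ] fun ω => μ0 (X ω))
    -- overlap: P(T=0|X) > 0 a.s., and P(T=1) > 0
    (hover : ∀ᵐ ω ∂μ, 0 ≤ p (X ω) ∧ p (X ω) < 1)
    (hT1 : 0 < μ {ω | T ω = true})
    -- consistency
    (Y : Ω → ℝ) (hYdef : ∀ ω, Y ω = if T ω then Y1 ω else Y0 ω)
    (P1 : ℝ) (hP1 : P1 = (μ {ω | T ω = true}).toReal)
    (ψ11 ψ01 : Ω → ℝ)
    (hψ11 : ∀ ω, ψ11 ω =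
      (p (X ω) / P1) * ((if T ω then (1 : ℝ) else 0) * (Y ω - μ1 (X ω)) / p (X ω)) +
        (if T ω then (1 : ℝ) else 0) * μ1 (X ω) / P1)
    (hψ01 : ∀ ω, ψ01 ω =
      (p (X ω) / P1) * ((if T ω then (0 : ℝ) else 1) * (Y ω - μ0 (X ω)) / (1 - p (X ω))) +
        (if T ω then (1 : ℝ) else 0) * μ0 (X ω) / P1)
    -- all relevant expectations exist and are finite
    (hintY0 : Integrable Y0 μ) (hintY1 : Integrable Y1 μ)
    (hintψ01 : Integrable ψ01 μ) (hintψ11 : Integrable ψ11 μ) :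
    (∫ ω, ψ01 ω ∂μ = ∫ ω, Y0 ω ∂(ProbabilityTheory.cond μ {ω | T ω = true})) ∧
    (∫ ω, ψ11 ω ∂μ = ∫ ω, Y1 ω ∂(ProbabilityTheory.cond μ {ω | T ω = true})) ∧
    (∫ ω, (ψ11 ω - ψ01 ω) ∂μ =
      ∫ ω, (Y1 ω - Y0 ω) ∂(ProbabilityTheory.cond μ {ω | T ω = true})) :=
  att_main μ hmX T hT Y0 Y1 hY0 hucf0 (fun ω => p (X ω)) (fun ω => μ1 (X ω))
    (fun ω => μ0 (X ω)) hp hμ0 hover hT1 Y hYdef P1 hP1 ψ11 ψ01 hψ11 hψ01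
    hintY0 hintY1 hintψ01 hintψ11
end
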